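/- arXiv:math/0503138 — 7 statements merged into one kernel-verified Lean document; each statement's English description precedes it below -/
import Mathlib

section
/- An intuitionistic fuzzy set A = (μ_A, λ_A) in a hyperquasigroup G is an intuitionistic fuzzy sub-hyperquasigroup of G if and only if both □A = (μ_A, μ_A^c) and ◇A = (λ_A^c, λ_A) are intuitionistic fuzzy sub-hyperquasigroups of G. -/
open Set

/-- A hyperquasigroup: a hypergroupoid (hyperoperation with nonempty values)
satisfying the reproducibility condition. -/
structure HyperQuasigroup (G : Type*) where
  hop : G → G → Set G
  hop_nonempty : ∀ x y, (hop x y).Nonempty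
  repro_right : ∀ x y, ∃ u, y ∈ hop x u
  repro_left : ∀ x y, ∃ v, y ∈ hop v x

/-- A fuzzy set: values in [0,1]. -/
def IsFuzzy {G : Type*} (μ : G → ℝ) : Prop := ∀ x, μ x ∈ Set.Icc (0:ℝ) 1

/-- An intuitionistic fuzzy set: μ, λ valued in [0,1] with μ + λ ≤ 1 pointwise. -/
def IsIFS {G : Type*} (μ lam : G → ℝ) : Prop :=
  IsFuzzy μ ∧ IsFuzzy lam ∧ ∀ x, μ x + lam x ≤ 1

/-- Intuitionistic fuzzy sub-hyperquasigroup: the four conditions. -/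
def IsIFSH {G : Type*} (H : HyperQuasigroup G) (μ lam : G → ℝ) : Prop :=
  (∀ x y, min (μ x) (μ y) ≤ sInf (μ '' H.hop x y)) ∧
  (∀ x a, ∃ y z, x ∈ H.hop a y ∧ x ∈ H.hop z a ∧
      min (μ a) (μ x) ≤ min (μ y) (μ z)) ∧
  (∀ x y, sSup (lam '' H.hop x y) ≤ max (lam x) (lam y)) ∧
  (∀ x a, ∃ y z, x ∈ H.hop a y ∧ x ∈ H.hop z a ∧
      max (lam y) (lam z) ≤ max (lam a) (lam x))

/-- Sub-hyperquasigroup: nonempty, closed under the hyperoperation,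
and internally reproducible. -/
def IsSubHQ {G : Type*} (H : HyperQuasigroup G) (K : Set G) : Prop :=
  K.Nonempty ∧
  (∀ x ∈ K, ∀ y ∈ K, H.hop x y ⊆ K) ∧
  (∀ a ∈ K, ∀ x ∈ K, ∃ y ∈ K, x ∈ H.hop a y) ∧
  (∀ a ∈ K, ∀ x ∈ K, ∃ z ∈ K, x ∈ H.hop z a)

/-- Fuzzy sub-hyperquasigroup. -/
def IsFuzzySubHQ {G : Type*} (H : HyperQuasigroup G) (μ : G → ℝ) : Prop :=
  IsFuzzy μ ∧
  (∀ x y, min (μ x) (μ y) ≤ sInf (μ '' H.hop x y)) ∧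
  (∀ x a, ∃ y, x ∈ H.hop a y ∧ min (μ a) (μ x) ≤ μ y) ∧
  (∀ x a, ∃ z, x ∈ H.hop z a ∧ min (μ a) (μ x) ≤ μ z)

lemma one_sub_min_aux (a b : ℝ) : 1 - min a b = max (1 - a) (1 - b) := by
  rcases le_total a b with h | h
  · rw [min_eq_left h, max_eq_left (by linarith)]
  · rw [min_eq_right h, max_eq_right (by linarith)]

lemma one_sub_max_aux (a b : ℝ) : 1 - max a b = min (1 - a) (1 - b) := by
  rcases le_total a b with h | h
  · rw [max_eq_right h, min_eq_right (by linarith)]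
  · rw [max_eq_left h, min_eq_left (by linarith)]

/-- A is an IFSH of G iff □A and ◇A are IFSHs of G. -/
theorem isIFSH_iff_box_and_diamond {G : Type*} (H : HyperQuasigroup G) (μ lam : G → ℝ)
    (hA : IsIFS μ lam) :
    IsIFSH H μ lam ↔
      (IsIFSH H μ (fun x => 1 - μ x) ∧ IsIFSH H (fun x => 1 - lam x) lam) := by
  obtain ⟨hμ, hlam, _⟩ := hA
  constructor
  · rintro ⟨h1, h2, h3, h4⟩
    refine ⟨⟨h1, h2, ?_, ?_⟩, ⟨?_, ?_, h3, h4⟩⟩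
    · intro x y
      apply csSup_le ((H.hop_nonempty x y).image _)
      rintro b ⟨z, hz, rfl⟩
      have hle : min (μ x) (μ y) ≤ μ z :=
        (h1 x y).trans (csInf_le ⟨0, by rintro t ⟨w, _, rfl⟩; exact (hμ w).1⟩
          (Set.mem_image_of_mem μ hz))
      dsimp only
      rw [← one_sub_min_aux]
      linarith
    · intro x a
      obtain ⟨y, z, hy, hz, hmin⟩ := h2 x a
      refine ⟨y, z, hy, hz, ?_⟩
      dsimp only
      rw [← one_sub_min_aux, ← one_sub_min_aux]
      linarith
    · intro x y
      apply le_csInf ((H.hop_nonempty x y).image _)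
      rintro b ⟨z, hz, rfl⟩
      have hle : lam z ≤ max (lam x) (lam y) :=
        (le_csSup ⟨1, by rintro t ⟨w, _, rfl⟩; exact (hlam w).2⟩
          (Set.mem_image_of_mem lam hz)).trans (h3 x y)
      dsimp only
      rw [← one_sub_max_aux]
      linarith
    · intro x a
      obtain ⟨y, z, hy, hz, hmax⟩ := h4 x a
      refine ⟨y, z, hy, hz, ?_⟩
      dsimp only
      rw [← one_sub_max_aux, ← one_sub_max_aux]
      linarith
  · rintro ⟨⟨h1, h2, _, _⟩, ⟨_, _, h3, h4⟩⟩
    exact ⟨h1, h2, h3, h4⟩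
end

section
/- If A = (μ_A, λ_A) is an intuitionistic fuzzy sub-hyperquasigroup of a hyperquasigroup G, then for every t ∈ Im(μ_A) ∩ Im(λ_A), the upper level cut U(μ_A; t) = {x ∈ G | μ_A(x) ≥ t} is a sub-hyperquasigroup of G. -/
open Set

/-- Upper level cuts of an IFSH at t ∈ Im(μ)∩Im(λ) are sub-hyperquasigroups. -/
theorem upperCut_isSubHQ {G : Type*} (H : HyperQuasigroup G) (μ lam : G → ℝ)
    (hA : IsIFS μ lam) (h : IsIFSH H μ lam)
    (t : ℝ) (ht : t ∈ Set.range μ ∩ Set.range lam) :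
    IsSubHQ H {x | t ≤ μ x} := by
  obtain ⟨⟨x0, hx0⟩, -⟩ := ht
  obtain ⟨h1, h2, -, -⟩ := h
  refine ⟨⟨x0, by simp [hx0.ge]⟩, ?_, ?_, ?_⟩
  · intro x hx y hy z hz
    have hmin : t ≤ min (μ x) (μ y) := le_min hx hy
    have hinf : sInf (μ '' H.hop x y) ≤ μ z :=
      csInf_le ⟨0, fun r ⟨w, _, hw⟩ => hw ▸ (hA.1 w).1⟩ ⟨z, hz, rfl⟩
    exact le_trans (le_trans hmin (h1 x y)) hinf
  · intro a ha x hx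
    obtain ⟨y, z, hy, hz, hmin⟩ := h2 x a
    exact ⟨y, le_trans (le_trans (le_min ha hx) hmin) (min_le_left _ _), hy⟩
  · intro a ha x hx
    obtain ⟨y, z, hy, hz, hmin⟩ := h2 x a
    exact ⟨z, le_trans (le_trans (le_min ha hx) hmin) (min_le_right _ _), hz⟩
end

section
/- Let A = (μ_A, λ_A) be an intuitionistic fuzzy set in a hyperquasigroup G such that for every t ∈ [0,1], whenever the sets U(μ_A; t) = {x | μ_A(x) ≥ t} and L(λ_A; t) = {x | λ_A(x) ≤ t} are nonempty they are sub-hyperquasigroups of G. Then A is an intuitionistic fuzzy sub-hyperquasigroup of G. -/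
open Set

/-- If all nonempty level cuts (for t ∈ [0,1]) are sub-hyperquasigroups, then A is an IFSH. -/
theorem isIFSH_of_levelCuts {G : Type*} (H : HyperQuasigroup G) (μ lam : G → ℝ)
    (hA : IsIFS μ lam)
    (hU : ∀ t ∈ Set.Icc (0:ℝ) 1,
      ({x | t ≤ μ x} : Set G).Nonempty → IsSubHQ H {x | t ≤ μ x})
    (hL : ∀ t ∈ Set.Icc (0:ℝ) 1,
      ({x | lam x ≤ t} : Set G).Nonempty → IsSubHQ H {x | lam x ≤ t}) :
    IsIFSH H μ lam := by
  obtain ⟨hμ, hlam, _⟩ := hA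
  refine ⟨?_, ?_, ?_, ?_⟩
  · intro x y
    set t := min (μ x) (μ y) with ht
    have htI : t ∈ Set.Icc (0:ℝ) 1 :=
      ⟨le_min (hμ x).1 (hμ y).1, min_le_of_left_le (hμ x).2⟩
    have hx : x ∈ ({z | t ≤ μ z} : Set G) := show t ≤ μ x from min_le_left _ _
    have hy : y ∈ ({z | t ≤ μ z} : Set G) := show t ≤ μ y from min_le_right _ _
    obtain ⟨_, hclosed, _, _⟩ := hU t htI ⟨x, hx⟩
    refine le_csInf ((H.hop_nonempty x y).image μ) ?_
    rintro b ⟨z, hz, rfl⟩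
    exact hclosed x hx y hy hz
  · intro x a
    set t := min (μ a) (μ x) with ht
    have htI : t ∈ Set.Icc (0:ℝ) 1 :=
      ⟨le_min (hμ a).1 (hμ x).1, min_le_of_left_le (hμ a).2⟩
    have ha : a ∈ ({z | t ≤ μ z} : Set G) := show t ≤ μ a from min_le_left _ _
    have hx : x ∈ ({z | t ≤ μ z} : Set G) := show t ≤ μ x from min_le_right _ _
    obtain ⟨_, _, hr, hl⟩ := hU t htI ⟨a, ha⟩
    obtain ⟨y, hy, hxy⟩ := hr a ha x hx
    obtain ⟨z, hz, hxz⟩ := hl a ha x hx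
    exact ⟨y, z, hxy, hxz, le_min hy hz⟩
  · intro x y
    set t := max (lam x) (lam y) with ht
    have htI : t ∈ Set.Icc (0:ℝ) 1 :=
      ⟨le_max_of_le_left (hlam x).1, max_le (hlam x).2 (hlam y).2⟩
    have hx : x ∈ ({z | lam z ≤ t} : Set G) := show lam x ≤ t from le_max_left _ _
    have hy : y ∈ ({z | lam z ≤ t} : Set G) := show lam y ≤ t from le_max_right _ _
    obtain ⟨_, hclosed, _, _⟩ := hL t htI ⟨x, hx⟩
    refine csSup_le ((H.hop_nonempty x y).image lam) ?_
    rintro b ⟨z, hz, rfl⟩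
    exact hclosed x hx y hy hz
  · intro x a
    set t := max (lam a) (lam x) with ht
    have htI : t ∈ Set.Icc (0:ℝ) 1 :=
      ⟨le_max_of_le_left (hlam a).1, max_le (hlam a).2 (hlam x).2⟩
    have ha : a ∈ ({z | lam z ≤ t} : Set G) := show lam a ≤ t from le_max_left _ _
    have hx : x ∈ ({z | lam z ≤ t} : Set G) := show lam x ≤ t from le_max_right _ _
    obtain ⟨_, _, hr, hl⟩ := hL t htI ⟨a, ha⟩
    obtain ⟨y, hy, hxy⟩ := hr a ha x hx
    obtain ⟨z, hz, hxz⟩ := hl a ha x hx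
    exact ⟨y, z, hxy, hxz, max_le hy hz⟩
end

section
/- Let K be a sub-hyperquasigroup of a hyperquasigroup (G, ∘), and let 0 ≤ α₁ < α₀, 0 ≤ β₀ < β₁ with αᵢ + βᵢ ≤ 1 for i = 0, 1. Define μ(x) = α₀ if x ∈ K and α₁ otherwise, and λ(x) = β₀ if x ∈ K and β₁ otherwise. Then A = (μ, λ) is an intuitionistic fuzzy sub-hyperquasigroup of G, and U(μ; α₀) = K = L(λ; β₀). -/
open Set

attribute [local instance] Classical.propDecidable

/-- Two-valued intuitionistic fuzzy set supported on a sub-hyperquasigroup is an IFSH,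
with the corresponding level cuts equal to K. -/
theorem twoValued_isIFSH {G : Type*} (H : HyperQuasigroup G) (K : Set G)
    (hK : IsSubHQ H K) (α₀ α₁ β₀ β₁ : ℝ)
    (hα₁ : 0 ≤ α₁) (hα : α₁ < α₀) (hβ₀ : 0 ≤ β₀) (hβ : β₀ < β₁)
    (h0 : α₀ + β₀ ≤ 1) (h1 : α₁ + β₁ ≤ 1) :
    IsIFS (fun x => if x ∈ K then α₀ else α₁) (fun x => if x ∈ K then β₀ else β₁) ∧
    IsIFSH H (fun x => if x ∈ K then α₀ else α₁) (fun x => if x ∈ K then β₀ else β₁) ∧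
    {x | α₀ ≤ (if x ∈ K then α₀ else α₁)} = K ∧
    {x | (if x ∈ K then β₀ else β₁) ≤ β₀} = K := by
  classical
  set μ : G → ℝ := fun x => if x ∈ K then α₀ else α₁ with hμ
  set lam : G → ℝ := fun x => if x ∈ K then β₀ else β₁ with hlam
  have hα₀1 : α₀ ≤ 1 := by linarith
  have hβ₁1 : β₁ ≤ 1 := by linarith
  have hμlb : ∀ x, α₁ ≤ μ x := by
    intro x; simp only [hμ]; split <;> linarith
  have hμub : ∀ x, μ x ≤ α₀ := by
    intro x; simp only [hμ]; split <;> linarith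
  have hlamlb : ∀ x, β₀ ≤ lam x := by
    intro x; simp only [hlam]; split <;> linarith
  have hlamub : ∀ x, lam x ≤ β₁ := by
    intro x; simp only [hlam]; split <;> linarith
  have hμK : ∀ x ∈ K, μ x = α₀ := by intro x hx; simp [hμ, hx]
  have hlamK : ∀ x ∈ K, lam x = β₀ := by intro x hx; simp [hlam, hx]
  obtain ⟨hKne, hclosed, hrepR, hrepL⟩ := hK
  refine ⟨⟨?_, ?_, ?_⟩, ⟨?_, ?_, ?_, ?_⟩, ?_, ?_⟩
  · intro x; exact ⟨le_trans hα₁ (hμlb x), le_trans (hμub x) hα₀1⟩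
  · intro x; exact ⟨le_trans hβ₀ (hlamlb x), le_trans (hlamub x) hβ₁1⟩
  · intro x; simp only [hμ, hlam]; split <;> linarith
  · -- condition 1
    intro x y
    have hne : (μ '' H.hop x y).Nonempty := (H.hop_nonempty x y).image μ
    by_cases hx : x ∈ K
    · by_cases hy : y ∈ K
      · have : ∀ r ∈ μ '' H.hop x y, α₀ ≤ r := by
          rintro r ⟨z, hz, rfl⟩
          exact (hμK z (hclosed x hx y hy hz)).ge
        calc min (μ x) (μ y) ≤ α₀ := le_trans (min_le_left _ _) (hμub x)
          _ ≤ sInf (μ '' H.hop x y) := le_csInf hne this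
      · have : min (μ x) (μ y) ≤ α₁ := le_trans (min_le_right _ _) (by simp [hμ, hy])
        refine le_trans this (le_csInf hne ?_)
        rintro r ⟨z, hz, rfl⟩; exact hμlb z
    · have : min (μ x) (μ y) ≤ α₁ := le_trans (min_le_left _ _) (by simp [hμ, hx])
      refine le_trans this (le_csInf hne ?_)
      rintro r ⟨z, hz, rfl⟩; exact hμlb z
  · -- condition 2
    intro x a
    by_cases hax : a ∈ K ∧ x ∈ K
    · obtain ⟨ha, hx⟩ := hax
      obtain ⟨y, hy, hxy⟩ := hrepR a ha x hx
      obtain ⟨z, hz, hxz⟩ := hrepL a ha x hx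
      exact ⟨y, z, hxy, hxz, by simp [hμK, ha, hx, hy, hz]⟩
    · obtain ⟨y, hxy⟩ := H.repro_right a x
      obtain ⟨z, hxz⟩ := H.repro_left a x
      have : min (μ a) (μ x) = α₁ := by
        rcases not_and_or.mp hax with h | h
        · have := min_le_left (μ a) (μ x)
          have h' : μ a = α₁ := by simp [hμ, h]
          exact le_antisymm (by rw [← h']; exact min_le_left _ _)
            (le_min (hμlb a) (hμlb x))
        · have h' : μ x = α₁ := by simp [hμ, h]
          exact le_antisymm (by rw [← h']; exact min_le_right _ _)
            (le_min (hμlb a) (hμlb x))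
      exact ⟨y, z, hxy, hxz, by rw [this]; exact le_min (hμlb y) (hμlb z)⟩
  · -- condition 3
    intro x y
    have hne : (lam '' H.hop x y).Nonempty := (H.hop_nonempty x y).image lam
    by_cases hx : x ∈ K
    · by_cases hy : y ∈ K
      · have h1' : sSup (lam '' H.hop x y) ≤ β₀ := csSup_le hne (by
          rintro r ⟨z, hz, rfl⟩; exact (hlamK z (hclosed x hx y hy hz)).le)
        exact le_trans h1' (le_trans (hlamK x hx).ge (le_max_left _ _))
      · have h1' : sSup (lam '' H.hop x y) ≤ β₁ := csSup_le hne (by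
          rintro r ⟨z, hz, rfl⟩; exact hlamub z)
        exact le_trans h1' (le_trans (le_of_eq (by simp [hlam, hy])) (le_max_right _ _))
    · have h1' : sSup (lam '' H.hop x y) ≤ β₁ := csSup_le hne (by
        rintro r ⟨z, hz, rfl⟩; exact hlamub z)
      exact le_trans h1' (le_trans (le_of_eq (by simp [hlam, hx])) (le_max_left _ _))
  · -- condition 4
    intro x a
    by_cases hax : a ∈ K ∧ x ∈ K
    · obtain ⟨ha, hx⟩ := hax
      obtain ⟨y, hy, hxy⟩ := hrepR a ha x hx
      obtain ⟨z, hz, hxz⟩ := hrepL a ha x hx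
      exact ⟨y, z, hxy, hxz, by simp [hlamK, ha, hx, hy, hz]⟩
    · obtain ⟨y, hxy⟩ := H.repro_right a x
      obtain ⟨z, hxz⟩ := H.repro_left a x
      have : max (lam a) (lam x) = β₁ := by
        rcases not_and_or.mp hax with h | h
        · have h' : lam a = β₁ := by simp [hlam, h]
          exact le_antisymm (max_le (hlamub a) (hlamub x))
            (by rw [← h']; exact le_max_left _ _)
        · have h' : lam x = β₁ := by simp [hlam, h]
          exact le_antisymm (max_le (hlamub a) (hlamub x))
            (by rw [← h']; exact le_max_right _ _)
      exact ⟨y, z, hxy, hxz, by rw [this]; exact max_le (hlamub y) (hlamub z)⟩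
  · ext x
    simp only [Set.mem_setOf_eq]
    constructor
    · intro hx
      by_contra h
      simp only [if_neg h] at hx
      linarith
    · intro hx; simp [hx]
  · ext x
    simp only [Set.mem_setOf_eq]
    constructor
    · intro hx
      by_contra h
      simp only [if_neg h] at hx
      linarith
    · intro hx; simp [hx]
end

section
/- Let Ω be a nonempty finite subset of [0,1] and {K_α | α ∈ Ω} a family of sub-hyperquasigroups of a hyperquasigroup G such that G = ⋃_{α ∈ Ω} K_α and for all α, β ∈ Ω: α > β if and only if K_α ⊊ K_β. Define μ_A(x) = sup{α ∈ Ω | x ∈ K_α} and λ_A(x) = inf{α ∈ Ω | x ∈ K_α}. Then A = (μ_A, λ_A) is an intuitionistic fuzzy sub-hyperquasigroup of G. -/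
open Set

/-- From a finite decreasing family of sub-hyperquasigroups covering G, the sup/inf
membership functions define an IFSH of G. -/
theorem family_isIFSH {G : Type*} (H : HyperQuasigroup G)
    (Ω : Finset ℝ) (hne : Ω.Nonempty) (hΩ : ∀ α ∈ Ω, α ∈ Set.Icc (0:ℝ) 1)
    (K : ℝ → Set G) (hK : ∀ α ∈ Ω, IsSubHQ H (K α))
    (hcover : ∀ x : G, ∃ α ∈ Ω, x ∈ K α)
    (hmono : ∀ α ∈ Ω, ∀ β ∈ Ω, (β < α ↔ K α ⊂ K β)) :
    IsIFSH H (fun x => sSup {α : ℝ | α ∈ Ω ∧ x ∈ K α})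
      (fun x => sInf {α : ℝ | α ∈ Ω ∧ x ∈ K α}) := by
  classical
  have hfin : ∀ x : G, ({α : ℝ | α ∈ Ω ∧ x ∈ K α}).Finite :=
    fun x => Ω.finite_toSet.subset (fun α hα => hα.1)
  have hnee : ∀ x : G, ({α : ℝ | α ∈ Ω ∧ x ∈ K α}).Nonempty := by
    intro x; obtain ⟨α, hα, hx⟩ := hcover x; exact ⟨α, hα, hx⟩
  have hdown : ∀ α ∈ Ω, ∀ β ∈ Ω, β ≤ α → K α ⊆ K β := by
    intro α hα β hβ hle
    rcases lt_or_eq_of_le hle with h | h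
    · exact ((hmono α hα β hβ).1 h).subset
    · subst h; exact subset_rfl
  have hmem : ∀ x : G, sSup {α : ℝ | α ∈ Ω ∧ x ∈ K α} ∈ {α : ℝ | α ∈ Ω ∧ x ∈ K α} :=
    fun x => (hnee x).csSup_mem (hfin x)
  have hleS : ∀ x : G, ∀ β ∈ {α : ℝ | α ∈ Ω ∧ x ∈ K α},
      β ≤ sSup {α : ℝ | α ∈ Ω ∧ x ∈ K α} :=
    fun x β hβ => le_csSup (hfin x).bddAbove hβ
  have hKmem : ∀ x : G, ∀ β ∈ Ω, β ≤ sSup {α : ℝ | α ∈ Ω ∧ x ∈ K α} → x ∈ K β := by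
    intro x β hβ hb
    exact hdown _ (hmem x).1 β hβ hb (hmem x).2
  set m : ℝ := Ω.min' hne with hm
  have hmmem : ∀ x : G, m ∈ {α : ℝ | α ∈ Ω ∧ x ∈ K α} := by
    intro x
    refine ⟨Ω.min'_mem hne, hKmem x m (Ω.min'_mem hne) ?_⟩
    exact Ω.min'_le _ (hmem x).1
  have hlam : ∀ x : G, sInf {α : ℝ | α ∈ Ω ∧ x ∈ K α} = m := by
    intro x
    apply le_antisymm
    · exact csInf_le (hfin x).bddBelow (hmmem x)
    · exact le_csInf (hnee x) (fun b hb => Ω.min'_le b hb.1)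
  refine ⟨?_, ?_, ?_, ?_⟩
  · -- condition 1
    intro x y
    simp only
    set γ : ℝ := min (sSup {α : ℝ | α ∈ Ω ∧ x ∈ K α}) (sSup {α : ℝ | α ∈ Ω ∧ y ∈ K α})
      with hγ
    have hγΩ : γ ∈ Ω := by
      rcases min_choice (sSup {α : ℝ | α ∈ Ω ∧ x ∈ K α})
        (sSup {α : ℝ | α ∈ Ω ∧ y ∈ K α}) with h | h
      · rw [hγ, h]; exact (hmem x).1
      · rw [hγ, h]; exact (hmem y).1
    have hxγ : x ∈ K γ := hKmem x γ hγΩ (min_le_left _ _)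
    have hyγ : y ∈ K γ := hKmem y γ hγΩ (min_le_right _ _)
    have hsub : H.hop x y ⊆ K γ := (hK γ hγΩ).2.1 x hxγ y hyγ
    refine le_csInf ⟨_, Set.mem_image_of_mem _ (H.hop_nonempty x y).choose_spec⟩ ?_
    rintro b ⟨z, hz, rfl⟩
    exact hleS z γ ⟨hγΩ, hsub hz⟩
  · -- condition 2
    intro x a
    simp only
    set γ : ℝ := min (sSup {α : ℝ | α ∈ Ω ∧ a ∈ K α}) (sSup {α : ℝ | α ∈ Ω ∧ x ∈ K α})
      with hγ
    have hγΩ : γ ∈ Ω := by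
      rcases min_choice (sSup {α : ℝ | α ∈ Ω ∧ a ∈ K α})
        (sSup {α : ℝ | α ∈ Ω ∧ x ∈ K α}) with h | h
      · rw [hγ, h]; exact (hmem a).1
      · rw [hγ, h]; exact (hmem x).1
    have haγ : a ∈ K γ := hKmem a γ hγΩ (min_le_left _ _)
    have hxγ : x ∈ K γ := hKmem x γ hγΩ (min_le_right _ _)
    obtain ⟨y, hyK, hxy⟩ := (hK γ hγΩ).2.2.1 a haγ x hxγ
    obtain ⟨z, hzK, hxz⟩ := (hK γ hγΩ).2.2.2 a haγ x hxγ
    refine ⟨y, z, hxy, hxz, le_min ?_ ?_⟩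
    · exact hleS y γ ⟨hγΩ, hyK⟩
    · exact hleS z γ ⟨hγΩ, hzK⟩
  · -- condition 3
    intro x y
    simp only
    refine csSup_le ⟨_, Set.mem_image_of_mem _ (H.hop_nonempty x y).choose_spec⟩ ?_
    rintro b ⟨z, hz, rfl⟩
    simp [hlam]
  · -- condition 4
    intro x a
    simp only
    obtain ⟨y, hy⟩ := H.repro_right a x
    obtain ⟨z, hz⟩ := H.repro_left a x
    refine ⟨y, z, hy, hz, ?_⟩
    simp [hlam]
end

section
/- For any fixed α ∈ (0,1), the quotient of IFSH(G) by the equivalence relation U^α, where (A, B) ∈ U^α iff U(μ_A; α) = U(μ_B; α), is equipotent (in bijection) with S(G) ∪ {∅}. -/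
open Set

noncomputable def chi {G : Type*} (T : Set G) (x : G) : ℝ :=
  by classical exact if x ∈ T then 1 else 0

lemma chi_mem {G : Type*} {T : Set G} {x : G} (h : x ∈ T) : chi T x = 1 := by
  simp [chi, h]

lemma chi_not_mem {G : Type*} {T : Set G} {x : G} (h : x ∉ T) : chi T x = 0 := by
  simp [chi, h]

lemma chi_nonneg {G : Type*} (T : Set G) (x : G) : 0 ≤ chi T x := by
  by_cases h : x ∈ T <;> simp [chi, h]

lemma chi_le_one {G : Type*} (T : Set G) (x : G) : chi T x ≤ 1 := by
  by_cases h : x ∈ T <;> simp [chi, h]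

lemma cut_subHQ_or_empty {G : Type*} (H : HyperQuasigroup G) {μ lam : G → ℝ} {α : ℝ}
    (hF : IsFuzzy μ) (h : IsIFSH H μ lam) :
    IsSubHQ H {x | α ≤ μ x} ∨ {x | α ≤ μ x} = ∅ := by
  rcases Set.eq_empty_or_nonempty {x | α ≤ μ x} with he | hne
  · right; exact he
  left
  refine ⟨hne, ?_, ?_, ?_⟩
  · intro x hx y hy z hz
    have h1 : α ≤ sInf (μ '' H.hop x y) := le_trans (le_min hx hy) (h.1 x y)
    have hbd : BddBelow (μ '' H.hop x y) := by
      refine ⟨0, ?_⟩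
      rintro v ⟨w, -, rfl⟩
      exact (hF w).1
    exact h1.trans (csInf_le hbd ⟨z, hz, rfl⟩)
  · intro a ha x hx
    obtain ⟨y, z, hy, hz, hmin⟩ := h.2.1 x a
    exact ⟨y, le_trans (le_min ha hx) (hmin.trans (min_le_left _ _)), hy⟩
  · intro a ha x hx
    obtain ⟨y, z, hy, hz, hmin⟩ := h.2.1 x a
    exact ⟨z, le_trans (le_min ha hx) (hmin.trans (min_le_right _ _)), hz⟩

lemma chi_ifsh {G : Type*} (H : HyperQuasigroup G) (T : Set G)
    (hcl : ∀ x ∈ T, ∀ y ∈ T, H.hop x y ⊆ T)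
    (hr : ∀ a ∈ T, ∀ x ∈ T, ∃ y ∈ T, x ∈ H.hop a y)
    (hl : ∀ a ∈ T, ∀ x ∈ T, ∃ z ∈ T, x ∈ H.hop z a) :
    IsIFS (chi T) (fun x => 1 - chi T x) ∧ IsIFSH H (chi T) (fun x => 1 - chi T x) := by
  constructor
  · refine ⟨fun x => ⟨chi_nonneg T x, chi_le_one T x⟩,
      fun x => ⟨show (0:ℝ) ≤ 1 - chi T x by linarith [chi_le_one T x],
        show 1 - chi T x ≤ 1 by linarith [chi_nonneg T x]⟩,
      fun x => show chi T x + (1 - chi T x) ≤ 1 by linarith⟩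
  refine ⟨?_, ?_, ?_, ?_⟩
  · intro x y
    refine le_csInf ((H.hop_nonempty x y).image _) ?_
    rintro b ⟨w, hw, rfl⟩
    by_cases hwT : w ∈ T
    · rw [chi_mem hwT]
      exact min_le_of_left_le (chi_le_one T x)
    · have : ¬(x ∈ T ∧ y ∈ T) := fun ⟨hx, hy⟩ => hwT (hcl x hx y hy hw)
      rw [chi_not_mem hwT]
      rcases not_and_or.mp this with hx | hy
      · exact min_le_of_left_le (le_of_eq (chi_not_mem hx))
      · exact min_le_of_right_le (le_of_eq (chi_not_mem hy))
  · intro x a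
    by_cases hax : a ∈ T ∧ x ∈ T
    · obtain ⟨y, hyT, hy⟩ := hr a hax.1 x hax.2
      obtain ⟨z, hzT, hz⟩ := hl a hax.1 x hax.2
      refine ⟨y, z, hy, hz, ?_⟩
      rw [chi_mem hyT, chi_mem hzT, min_self]
      exact min_le_of_left_le (chi_le_one T a)
    · obtain ⟨y, hy⟩ := H.repro_right a x
      obtain ⟨z, hz⟩ := H.repro_left a x
      refine ⟨y, z, hy, hz, ?_⟩
      have h0 : min (chi T a) (chi T x) ≤ 0 := by
        rcases not_and_or.mp hax with h | h
        · exact min_le_of_left_le (le_of_eq (chi_not_mem h))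
        · exact min_le_of_right_le (le_of_eq (chi_not_mem h))
      exact h0.trans (le_min (chi_nonneg T y) (chi_nonneg T z))
  · intro x y
    refine csSup_le ((H.hop_nonempty x y).image _) ?_
    rintro b ⟨w, hw, rfl⟩
    show 1 - chi T w ≤ max (1 - chi T x) (1 - chi T y)
    by_cases hwT : w ∈ T
    · rw [chi_mem hwT, sub_self]
      exact le_max_of_le_left (by linarith [chi_le_one T x])
    · have : ¬(x ∈ T ∧ y ∈ T) := fun ⟨hx, hy⟩ => hwT (hcl x hx y hy hw)
      rw [chi_not_mem hwT]
      rcases not_and_or.mp this with hx | hy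
      · exact le_max_of_le_left (by rw [chi_not_mem hx])
      · exact le_max_of_le_right (by rw [chi_not_mem hy])
  · intro x a
    by_cases hax : a ∈ T ∧ x ∈ T
    · obtain ⟨y, hyT, hy⟩ := hr a hax.1 x hax.2
      obtain ⟨z, hzT, hz⟩ := hl a hax.1 x hax.2
      refine ⟨y, z, hy, hz, ?_⟩
      show max (1 - chi T y) (1 - chi T z) ≤ max (1 - chi T a) (1 - chi T x)
      rw [chi_mem hyT, chi_mem hzT, sub_self, max_self]
      exact le_max_of_le_left (by linarith [chi_le_one T a])
    · obtain ⟨y, hy⟩ := H.repro_right a x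
      obtain ⟨z, hz⟩ := H.repro_left a x
      refine ⟨y, z, hy, hz, ?_⟩
      show max (1 - chi T y) (1 - chi T z) ≤ max (1 - chi T a) (1 - chi T x)
      have h1 : (1:ℝ) ≤ max (1 - chi T a) (1 - chi T x) := by
        rcases not_and_or.mp hax with h | h
        · exact le_max_of_le_left (by rw [chi_not_mem h]; norm_num)
        · exact le_max_of_le_right (by rw [chi_not_mem h]; norm_num)
      refine le_trans ?_ h1
      exact max_le (by linarith [chi_nonneg T y]) (by linarith [chi_nonneg T z])

lemma cut_chi {G : Type*} (T : Set G) {α : ℝ} (hα : α ∈ Set.Ioo (0:ℝ) 1) :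
    {x | α ≤ chi T x} = T := by
  ext x
  by_cases h : x ∈ T
  · simp [chi_mem h, h, hα.2.le]
  · simp only [Set.mem_setOf_eq, chi_not_mem h, h, iff_false]
    exact not_le.mpr hα.1


/-- IFSH(G) modulo equality of upper α-level cuts is equipotent to S(G) ∪ {∅}. -/
theorem quotient_upperCut_equipotent {G : Type*} (H : HyperQuasigroup G)
    (α : ℝ) (hα : α ∈ Set.Ioo (0:ℝ) 1) :
    Nonempty
      (Quot (fun (A B : {p : (G → ℝ) × (G → ℝ) // IsIFS p.1 p.2 ∧ IsIFSH H p.1 p.2}) =>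
          {x | α ≤ A.val.1 x} = {x | α ≤ B.val.1 x}) ≃
        {T : Set G // IsSubHQ H T ∨ T = ∅}) := by
  classical
  have key : ∀ T : {T : Set G // IsSubHQ H T ∨ T = ∅},
      IsIFS (chi T.1) (fun x => 1 - chi T.1 x) ∧
        IsIFSH H (chi T.1) (fun x => 1 - chi T.1 x) := by
    rintro ⟨T, hT | rfl⟩
    · exact chi_ifsh H T hT.2.1 hT.2.2.1 hT.2.2.2
    · exact chi_ifsh H ∅ (by simp) (by simp) (by simp)
  refine ⟨{
    toFun := Quot.lift (fun A => ⟨{x | α ≤ A.val.1 x},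
        cut_subHQ_or_empty H A.2.1.1 A.2.2⟩) (fun A B hAB => Subtype.ext hAB),
    invFun := fun T => Quot.mk _ ⟨(chi T.1, fun x => 1 - chi T.1 x), key T⟩,
    left_inv := ?_, right_inv := ?_ }⟩
  · intro q
    induction q using Quot.ind with
    | _ A => exact Quot.sound (cut_chi _ hα)
  · intro T
    exact Subtype.ext (cut_chi T.1 hα)
end

section
/- Let (G, ∘) be a regular hyperquasigroup with fundamental equivalence relation β* such that G/β* is a quasigroup under β*(a) · β*(b) = β*(c) for c ∈ β*(a) ∘ β*(b). If A = (μ_A, λ_A) is an intuitionistic fuzzy sub-hyperquasigroup of G, then A/β* = (μ_{β*}, λ_{β*}), where μ_{β*}(β*(x)) = sup{μ_A(a) | a ∈ β*(x)} and λ_{β*}(β*(x)) = inf{λ_A(a) | a ∈ β*(x)}, is an intuitionistic fuzzy subquasigroup of the fundamental quasigroup G/β*. -/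
open Set

lemma min_sSup_le_of_forall {A B : Set ℝ} {T : ℝ} (hA : A.Nonempty) (hB : B.Nonempty)
    (bA : BddAbove A) (bB : BddAbove B)
    (hle : ∀ a ∈ A, ∀ b ∈ B, min a b ≤ T) : min (sSup A) (sSup B) ≤ T := by
  rcases le_total (sSup A) (sSup B) with h1 | h1
  · rw [min_eq_left h1]
    refine csSup_le hA fun a ha => ?_
    by_contra hT
    push_neg at hT
    have hBT : ∀ b ∈ B, b ≤ T := by
      intro b hb
      have := hle a ha b hb
      rcases le_total a b with h' | h'
      · rw [min_eq_left h'] at this; linarith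
      · rwa [min_eq_right h'] at this
    have : a ≤ T := (le_csSup bA ha).trans (h1.trans (csSup_le hB hBT))
    linarith
  · rw [min_eq_right h1]
    refine csSup_le hB fun b hb => ?_
    by_contra hT
    push_neg at hT
    have hAT : ∀ a ∈ A, a ≤ T := by
      intro a ha
      have := hle a ha b hb
      rcases le_total b a with h' | h'
      · rw [min_eq_right h'] at this; linarith
      · rwa [min_eq_left h'] at this
    have : b ≤ T := (le_csSup bB hb).trans (h1.trans (csSup_le hA hAT))
    linarith

lemma le_max_sInf_of_forall {A B : Set ℝ} {T : ℝ} (hA : A.Nonempty) (hB : B.Nonempty)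
    (bA : BddBelow A) (bB : BddBelow B)
    (hle : ∀ a ∈ A, ∀ b ∈ B, T ≤ max a b) : T ≤ max (sInf A) (sInf B) := by
  rcases le_total (sInf B) (sInf A) with h1 | h1
  · rw [max_eq_left h1]
    refine le_csInf hA fun a ha => ?_
    by_contra hT
    push_neg at hT
    have hBT : ∀ b ∈ B, T ≤ b := by
      intro b hb
      have := hle a ha b hb
      rcases le_total a b with h' | h'
      · rwa [max_eq_right h'] at this
      · rw [max_eq_left h'] at this; linarith
    have : T ≤ a := (le_csInf hB hBT).trans (h1.trans (csInf_le bA ha))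
    linarith
  · rw [max_eq_right h1]
    refine le_csInf hB fun b hb => ?_
    by_contra hT
    push_neg at hT
    have hAT : ∀ a ∈ A, T ≤ a := by
      intro a ha
      have := hle a ha b hb
      rcases le_total b a with h' | h'
      · rwa [max_eq_left h'] at this
      · rw [max_eq_right h'] at this; linarith
    have : T ≤ b := (le_csInf hA hAT).trans (h1.trans (csInf_le bB hb))
    linarith

/-- For a regular hyperquasigroup G with fundamental relation β* whose quotient is a
quasigroup, an IFSH of G induces an intuitionistic fuzzy subquasigroup of G/β*. -/
theorem fundamental_quotient_IFsubquasigroup {G : Type*} (H : HyperQuasigroup G)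
    (hreg : ∀ x y z : G, x ∈ H.hop y z → y ∈ H.hop x z ∧ z ∈ H.hop y x)
    (s : Setoid G) (m ld rd : Quotient s → Quotient s → Quotient s)
    (hm : ∀ a b : G, ∀ c ∈ H.hop a b, m (Quotient.mk s a) (Quotient.mk s b) = Quotient.mk s c)
    (hld1 : ∀ q r, m q (ld q r) = r) (hld2 : ∀ q r, ld q (m q r) = r)
    (hrd1 : ∀ q r, m (rd q r) r = q) (hrd2 : ∀ q r, rd (m q r) r = q)
    (μ lam : G → ℝ) (hA : IsIFS μ lam) (h : IsIFSH H μ lam) :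
    let μb : Quotient s → ℝ := fun q => sSup (μ '' {a : G | Quotient.mk s a = q})
    let lb : Quotient s → ℝ := fun q => sInf (lam '' {a : G | Quotient.mk s a = q})
    (∀ q, μb q + lb q ≤ 1) ∧
    (∀ q r, min (μb q) (μb r) ≤ μb (m q r) ∧
            min (μb q) (μb r) ≤ μb (ld q r) ∧
            min (μb q) (μb r) ≤ μb (rd q r)) ∧
    (∀ q r, lb (m q r) ≤ max (lb q) (lb r) ∧
            lb (ld q r) ≤ max (lb q) (lb r) ∧
            lb (rd q r) ≤ max (lb q) (lb r)) := by
  obtain ⟨hμ, hlam, hsum⟩ := hA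
  obtain ⟨h1, h2, h3, h4⟩ := h
  intro μb lb
  have hcls : ∀ q : Quotient s, {a : G | Quotient.mk s a = q}.Nonempty :=
    fun q => Quotient.exists_rep q
  have hclsi : ∀ (f : G → ℝ) (q : Quotient s),
      (f '' {a : G | Quotient.mk s a = q}).Nonempty :=
    fun f q => (hcls q).image f
  have bAμ : ∀ q : Quotient s, BddAbove (μ '' {a : G | Quotient.mk s a = q}) := by
    intro q
    refine ⟨1, ?_⟩
    rintro x ⟨a, -, rfl⟩
    exact (hμ a).2
  have bBl : ∀ q : Quotient s, BddBelow (lam '' {a : G | Quotient.mk s a = q}) := by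
    intro q
    refine ⟨0, ?_⟩
    rintro x ⟨a, -, rfl⟩
    exact (hlam a).1
  have hμmem : ∀ (q : Quotient s) (a : G), Quotient.mk s a = q → μ a ≤ μb q :=
    fun q a ha => le_csSup (bAμ q) ⟨a, ha, rfl⟩
  have hlmem : ∀ (q : Quotient s) (a : G), Quotient.mk s a = q → lb q ≤ lam a :=
    fun q a ha => csInf_le (bBl q) ⟨a, ha, rfl⟩
  have bhop_below : ∀ x y : G, BddBelow (μ '' H.hop x y) := by
    intro x y
    refine ⟨0, ?_⟩
    rintro t ⟨c, -, rfl⟩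
    exact (hμ c).1
  have bhop_above : ∀ x y : G, BddAbove (lam '' H.hop x y) := by
    intro x y
    refine ⟨1, ?_⟩
    rintro t ⟨c, -, rfl⟩
    exact (hlam c).2
  refine ⟨?_, ?_, ?_⟩
  · -- μb q + lb q ≤ 1
    intro q
    have : μb q ≤ 1 - lb q := by
      refine csSup_le (hclsi μ q) ?_
      rintro x ⟨a, ha, rfl⟩
      have h1' := hsum a
      have h2' := hlmem q a ha
      linarith
    linarith
  · -- μ part
    intro q r
    obtain ⟨a0, ha0⟩ := hcls q
    obtain ⟨b0, hb0⟩ := hcls r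
    have keym : ∀ a, Quotient.mk s a = q → ∀ b, Quotient.mk s b = r →
        min (μ a) (μ b) ≤ μb (m q r) := by
      intro a ha b hb
      obtain ⟨c, hc⟩ := H.hop_nonempty a b
      have hmc : Quotient.mk s c = m q r := by
        rw [← ha, ← hb, hm a b c hc]
      calc min (μ a) (μ b) ≤ sInf (μ '' H.hop a b) := h1 a b
        _ ≤ μ c := csInf_le (bhop_below a b) ⟨c, hc, rfl⟩
        _ ≤ μb (m q r) := hμmem _ c hmc
    have keyl : ∀ a, Quotient.mk s a = q → ∀ x, Quotient.mk s x = r →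
        min (μ a) (μ x) ≤ μb (ld q r) := by
      intro a ha x hx
      obtain ⟨y, z, hxy, hxz, hmin⟩ := h2 x a
      have hy : Quotient.mk s y = ld q r := by
        have : m q (Quotient.mk s y) = r := by
          rw [← ha, hm a y x hxy, hx]
        rw [← this, hld2]
      calc min (μ a) (μ x) ≤ min (μ y) (μ z) := hmin
        _ ≤ μ y := min_le_left _ _
        _ ≤ μb (ld q r) := hμmem _ y hy
    have keyr : ∀ a, Quotient.mk s a = q → ∀ b, Quotient.mk s b = r →
        min (μ a) (μ b) ≤ μb (rd q r) := by
      intro a ha b hb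
      obtain ⟨y, z, hxy, hxz, hmin⟩ := h2 a b
      have hz : Quotient.mk s z = rd q r := by
        have : m (Quotient.mk s z) r = q := by
          rw [← hb, hm z b a hxz, ha]
        rw [← this, hrd2]
      calc min (μ a) (μ b) = min (μ b) (μ a) := min_comm _ _
        _ ≤ min (μ y) (μ z) := hmin
        _ ≤ μ z := min_le_right _ _
        _ ≤ μb (rd q r) := hμmem _ z hz
    refine ⟨?_, ?_, ?_⟩
    · refine min_sSup_le_of_forall (hclsi μ q) (hclsi μ r) (bAμ q) (bAμ r) ?_
      rintro x ⟨a, ha, rfl⟩ y ⟨b, hb, rfl⟩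
      exact keym a ha b hb
    · refine min_sSup_le_of_forall (hclsi μ q) (hclsi μ r) (bAμ q) (bAμ r) ?_
      rintro x ⟨a, ha, rfl⟩ y ⟨b, hb, rfl⟩
      exact keyl a ha b hb
    · refine min_sSup_le_of_forall (hclsi μ q) (hclsi μ r) (bAμ q) (bAμ r) ?_
      rintro x ⟨a, ha, rfl⟩ y ⟨b, hb, rfl⟩
      exact keyr a ha b hb
  · -- lam part
    intro q r
    have keym : ∀ a, Quotient.mk s a = q → ∀ b, Quotient.mk s b = r →
        lb (m q r) ≤ max (lam a) (lam b) := by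
      intro a ha b hb
      obtain ⟨c, hc⟩ := H.hop_nonempty a b
      have hmc : Quotient.mk s c = m q r := by
        rw [← ha, ← hb, hm a b c hc]
      calc lb (m q r) ≤ lam c := hlmem _ c hmc
        _ ≤ sSup (lam '' H.hop a b) := le_csSup (bhop_above a b) ⟨c, hc, rfl⟩
        _ ≤ max (lam a) (lam b) := h3 a b
    have keyl : ∀ a, Quotient.mk s a = q → ∀ x, Quotient.mk s x = r →
        lb (ld q r) ≤ max (lam a) (lam x) := by
      intro a ha x hx
      obtain ⟨y, z, hxy, hxz, hmax⟩ := h4 x a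
      have hy : Quotient.mk s y = ld q r := by
        have : m q (Quotient.mk s y) = r := by
          rw [← ha, hm a y x hxy, hx]
        rw [← this, hld2]
      calc lb (ld q r) ≤ lam y := hlmem _ y hy
        _ ≤ max (lam y) (lam z) := le_max_left _ _
        _ ≤ max (lam a) (lam x) := hmax
    have keyr : ∀ a, Quotient.mk s a = q → ∀ b, Quotient.mk s b = r →
        lb (rd q r) ≤ max (lam a) (lam b) := by
      intro a ha b hb
      obtain ⟨y, z, hxy, hxz, hmax⟩ := h4 a b
      have hz : Quotient.mk s z = rd q r := by
        have : m (Quotient.mk s z) r = q := by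
          rw [← hb, hm z b a hxz, ha]
        rw [← this, hrd2]
      calc lb (rd q r) ≤ lam z := hlmem _ z hz
        _ ≤ max (lam y) (lam z) := le_max_right _ _
        _ ≤ max (lam b) (lam a) := hmax
        _ = max (lam a) (lam b) := max_comm _ _
    refine ⟨?_, ?_, ?_⟩
    · refine le_max_sInf_of_forall (hclsi lam q) (hclsi lam r) (bBl q) (bBl r) ?_
      rintro x ⟨a, ha, rfl⟩ y ⟨b, hb, rfl⟩
      exact keym a ha b hb
    · refine le_max_sInf_of_forall (hclsi lam q) (hclsi lam r) (bBl q) (bBl r) ?_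
      rintro x ⟨a, ha, rfl⟩ y ⟨b, hb, rfl⟩
      exact keyl a ha b hb
    · refine le_max_sInf_of_forall (hclsi lam q) (hclsi lam r) (bBl q) (bBl r) ?_
      rintro x ⟨a, ha, rfl⟩ y ⟨b, hb, rfl⟩
      exact keyr a ha b hb
end
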